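/- arXiv:2503.22702 — 2 statements merged into one kernel-verified Lean document; each statement's English description precedes it below -/
import Mathlib

section
/- For all natural numbers r ≤ n and reals x, 0 < q < 1, the identity Σ_{j=0}^{n} C(n, j) · B_{r,j}(x, q) · E_{n-j}([x]_{q^{-1}}) = C(n, r) · ([x]_q)^r · E_{n-r}(1) holds, where E_k denotes the k-th Euler polynomial (with B_{r,j}(x,q) = 0 for j < r). -/
/-!
Since `[1-x]_q = 1 - [x]_{q⁻¹}`, writing `y = [x]_{q⁻¹}` turns the `q`-Bernstein factor into
`C(j,r) [x]_q^r (1-y)^{j-r}`. The identity `C(n,j) C(j,r) = C(n,r) C(n-r,j-r)` then reduces the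
sum to `C(n,r) [x]_q^r Σ_k C(n-r,k) (1-y)^k E_{n-r-k}(y)`, which is the addition formula
`E_m(y + h) = Σ_k C(m,k) h^k E_{m-k}(y)` at `h = 1 - y`. The addition formula is read off from
the generating functions: `e^{hv} · 2e^{yv}/(e^v+1) = 2e^{(y+h)v}/(e^v+1)`.
-/

open PowerSeries

/-- The `q`-analog `[t]_q = (q^t - 1)/(q - 1)`, where `q ^ t` is the real power. -/
noncomputable def qnum (q t : ℝ) : ℝ := (q ^ t - 1) / (q - 1)

/-- The `q`-Bernstein polynomial `B_{r,n}(x,q) = C(n,r) ([x]_q)^r ([1-x]_q)^{n-r}`;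
note that it vanishes for `n < r` since then `C(n,r) = 0`. -/
noncomputable def qBernstein (r n : ℕ) (x q : ℝ) : ℝ :=
  (n.choose r : ℝ) * (qnum q x) ^ r * (qnum q (1 - x)) ^ (n - r)

theorem PowerSeries.coeff_rescale_exp_mul_mk {K : Type*} [Field K] [CharZero K]
    (h : K) (e : ℕ → K) (m : ℕ) :
    coeff m (rescale h (exp K) * mk fun k => e k / k.factorial) =
      (∑ k ∈ Finset.range (m + 1), (m.choose k : K) * h ^ k * e (m - k)) / m.factorial := by
  rw [coeff_mul, Finset.Nat.sum_antidiagonal_eq_sum_range_succ_mk, Finset.sum_div]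
  refine Finset.sum_congr rfl fun k hk => ?_
  have hkm : k ≤ m := Nat.lt_succ_iff.mp (Finset.mem_range.mp hk)
  simp only [coeff_rescale, coeff_exp, coeff_mk, map_div₀, map_one, map_natCast]
  have hm : (m.factorial : K) ≠ 0 := by exact_mod_cast m.factorial_ne_zero
  rw [Nat.cast_choose K hkm]
  field_simp

theorem euler_add_of_egf {K : Type*} [Field K] [CharZero K] (E : ℕ → K → K)
    (hE : ∀ y : K, (exp K + 1) * mk (fun k => E k y / (k.factorial : K)) =
        (2 : K) • rescale y (exp K))
    (y h : K) (m : ℕ) :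
    ∑ k ∈ Finset.range (m + 1), (m.choose k : K) * h ^ k * E (m - k) y = E m (y + h) := by
  have hexp_add_one : exp K + 1 ≠ 0 := fun h0 => by
    simpa using congrArg constantCoeff h0
  have hegf : rescale h (exp K) * mk (fun k => E k y / k.factorial) =
      mk fun k => E k (y + h) / k.factorial := by
    refine mul_left_cancel₀ hexp_add_one ?_
    rw [mul_left_comm, hE y, hE (y + h), mul_smul_comm, exp_mul_exp_eq_exp_add, add_comm]
  have hm : (m.factorial : K) ≠ 0 := by exact_mod_cast m.factorial_ne_zero
  simpa [coeff_rescale_exp_mul_mk, hm] using congrArg (coeff m) hegf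

theorem Finset.sum_range_choose_mul_choose {R : Type*} [CommSemiring R] (r m : ℕ)
    (f : ℕ → ℕ → R) :
    ∑ j ∈ range (r + m + 1), ((r + m).choose j * j.choose r : R) * f (j - r) (r + m - j) =
      (r + m).choose r * ∑ k ∈ range (m + 1), (m.choose k : R) * f k (m - k) := by
  rw [add_assoc, sum_range_add, mul_sum]
  have hlow : ∀ j ∈ range r, ((r + m).choose j * j.choose r : R) * f (j - r) (r + m - j) = 0 :=
    fun j hj => by simp [Nat.choose_eq_zero_of_lt (mem_range.mp hj)]
  rw [sum_eq_zero hlow, zero_add]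
  refine sum_congr rfl fun k _ => ?_
  have hchoose := Nat.choose_mul (n := r + m) (Nat.le_add_right r k)
  simp only [Nat.add_sub_cancel_left, Nat.add_sub_add_left] at hchoose ⊢
  rw [← mul_assoc, ← Nat.cast_mul, hchoose, Nat.cast_mul]

theorem qnum_one_sub {q : ℝ} (hq0 : 0 < q) (hq1 : q ≠ 1) (x : ℝ) :
    qnum q (1 - x) = 1 - qnum q⁻¹ x := by
  have hq_sub_one : q - 1 ≠ 0 := sub_ne_zero.mpr hq1
  have hone_sub_q : 1 - q ≠ 0 := sub_ne_zero.mpr hq1.symm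
  have hqx : q ^ x ≠ 0 := (Real.rpow_pos_of_pos hq0 x).ne'
  rw [qnum, qnum, Real.rpow_sub hq0, Real.rpow_one, Real.inv_rpow hq0.le]
  field_simp
  ring

/-- Theorem 2.4 (case `Y = 1`): identity relating `q`-Bernstein polynomials and the
Euler polynomials `E k y`, defined by the egf `2 e^{yv}/(e^v+1) = Σ E_k(y) v^k/k!`. -/
theorem stmt_9 (q x : ℝ) (hq0 : 0 < q) (hq1 : q < 1) (r n : ℕ) (hrn : r ≤ n)
    (E : ℕ → ℝ → ℝ)
    (hE : ∀ y : ℝ,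
      (PowerSeries.exp ℝ + 1) * PowerSeries.mk (fun k => E k y / (k.factorial : ℝ)) =
        (2 : ℝ) • PowerSeries.rescale y (PowerSeries.exp ℝ)) :
    ∑ j ∈ Finset.range (n + 1),
        (n.choose j : ℝ) * qBernstein r j x q * E (n - j) (qnum q⁻¹ x) =
      (n.choose r : ℝ) * (qnum q x) ^ r * E (n - r) 1 := by
  obtain ⟨m, rfl⟩ := Nat.exists_eq_add_of_le hrn
  set y := qnum q⁻¹ x
  have hBernstein (j : ℕ) :
      qBernstein r j x q = j.choose r * qnum q x ^ r * (1 - y) ^ (j - r) := by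
    rw [qBernstein, qnum_one_sub hq0 hq1.ne]
  calc ∑ j ∈ Finset.range (r + m + 1),
        ((r + m).choose j : ℝ) * qBernstein r j x q * E (r + m - j) y
      = ∑ j ∈ Finset.range (r + m + 1), ((r + m).choose j * j.choose r : ℝ) *
          (qnum q x ^ r * ((1 - y) ^ (j - r) * E (r + m - j) y)) :=
        Finset.sum_congr rfl fun j _ => by rw [hBernstein]; ring
    _ = (r + m).choose r * ∑ k ∈ Finset.range (m + 1), (m.choose k : ℝ) *
          (qnum q x ^ r * ((1 - y) ^ k * E (m - k) y)) :=
        Finset.sum_range_choose_mul_choose r m fun k l => qnum q x ^ r * ((1 - y) ^ k * E l y)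
    _ = (r + m).choose r * (qnum q x ^ r *
          ∑ k ∈ Finset.range (m + 1), (m.choose k : ℝ) * (1 - y) ^ k * E (m - k) y) := by
      simp only [Finset.mul_sum]
      exact Finset.sum_congr rfl fun k _ => by ring
    _ = (r + m).choose r * qnum q x ^ r * E (r + m - r) 1 := by
      rw [euler_add_of_egf E hE, add_sub_cancel, Nat.add_sub_cancel_left, mul_assoc]
end

section
/- For Y ~ Binomial(N, p), the probabilistic q-Bernstein polynomials satisfy B_{r,n}^Y(x, q) = ([x]_q)^r · C(n, r) · Σ_{m=0}^{n-r} p^m · (N(1 - [x]_{q^{-1}}))_m · S(n-r, m), where (y)_m denotes the falling factorial y(y-1)⋯(y-m+1) of a real number and S(n, m) the Stirling numbers of the second kind. -/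
open PowerSeries

/-- The falling factorial `(c)_m = c(c-1)⋯(c-m+1)` of a real number. -/
noncomputable def fallFact (c : ℝ) (m : ℕ) : ℝ := ∏ i ∈ Finset.range m, (c - i)

/-- The real power `G^c` of a formal power series `G` (with constant term `1`),
defined via the binomial series `(1+u)^c = Σ_m (c)_m u^m/m!` with `u = G - 1`:
since `(G-1)^m` has order `≥ m`, only finitely many terms contribute to each
coefficient. -/
noncomputable def psRpow (G : PowerSeries ℝ) (c : ℝ) : PowerSeries ℝ :=
  PowerSeries.mk fun n => ∑ m ∈ Finset.range (n + 1),
    (fallFact c m / (m.factorial : ℝ)) * PowerSeries.coeff n ((G - 1) ^ m)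

/-
The binomial series of `(1 + p(e^v - 1))^c` has `m`-th term `(c)_m p^m (e^v - 1)^m / m!`,
and `(e^v - 1)^m / m!` is the exponential generating function of `S(·, m)`. Hence the
`k`-th coefficient is `Σ_m (c)_m p^m S(k, m) / k!`; multiplying by `X^r` shifts `k = n - r`.
-/

theorem coeff_psRpow_one_add_smul (F : PowerSeries ℝ) (p c : ℝ) (k : ℕ) :
    coeff k (psRpow (1 + p • F) c) =
      ∑ m ∈ Finset.range (k + 1), fallFact c m / m.factorial * p ^ m * coeff k (F ^ m) := by
  simp only [psRpow, coeff_mk, add_sub_cancel_left, smul_pow, map_smul, smul_eq_mul, mul_assoc]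

theorem coeff_exp_sub_one_pow_of_egf (S : ℕ → ℕ → ℝ) (m k : ℕ)
    (hS : PowerSeries.mk (fun k => S k m / (k.factorial : ℝ)) =
      ((m.factorial : ℝ)⁻¹) • (PowerSeries.exp ℝ - 1) ^ m) :
    coeff k ((exp ℝ - 1) ^ m) = m.factorial * S k m / k.factorial := by
  have h := congrArg (coeff k) hS
  rw [coeff_mk, map_smul, smul_eq_mul] at h
  rw [mul_div_assoc, h]
  field_simp

theorem stmt_14_general (N : ℕ) (p : ℝ) (q x : ℝ)
    (r n : ℕ) (hrn : r ≤ n)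
    (S : ℕ → ℕ → ℝ)
    (hS : ∀ m : ℕ, PowerSeries.mk (fun k => S k m / (k.factorial : ℝ)) =
      ((m.factorial : ℝ)⁻¹) • (PowerSeries.exp ℝ - 1) ^ m) :
    (n.factorial : ℝ) * PowerSeries.coeff n
        (((qnum q x) ^ r / (r.factorial : ℝ)) •
          (PowerSeries.X ^ r *
            psRpow (1 + p • (PowerSeries.exp ℝ - 1)) ((N : ℝ) * (1 - qnum q⁻¹ x)))) =
      (qnum q x) ^ r * (n.choose r : ℝ) *
        ∑ m ∈ Finset.range (n - r + 1),
          p ^ m * fallFact ((N : ℝ) * (1 - qnum q⁻¹ x)) m * S (n - r) m := by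
  rw [map_smul, smul_eq_mul, coeff_X_pow_mul', if_pos hrn, coeff_psRpow_one_add_smul,
    Nat.cast_choose ℝ hrn, Finset.mul_sum, Finset.mul_sum, Finset.mul_sum]
  refine Finset.sum_congr rfl fun m _ => ?_
  rw [coeff_exp_sub_one_pow_of_egf S m (n - r) (hS m)]
  field_simp

/-- Theorem 3.4: the probabilistic `q`-Bernstein polynomials attached to
`Y ~ Binomial(N,p)` (defined as `n!` times the `n`-th coefficient of
`(v[x]_q)^r/r! · (1-p+pe^v)^{N(1-[x]_{q⁻¹})}`) expand through the Stirling numbers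
of the second kind `S` and falling factorials of `N(1-[x]_{q⁻¹})`. -/
theorem stmt_14 (N : ℕ) (p : ℝ) (hp0 : 0 ≤ p) (hp1 : p ≤ 1) (q x : ℝ)
    (hq0 : 0 < q) (hq1 : q < 1) (r n : ℕ) (hrn : r ≤ n)
    (S : ℕ → ℕ → ℝ)
    (hS : ∀ m : ℕ, PowerSeries.mk (fun k => S k m / (k.factorial : ℝ)) =
      ((m.factorial : ℝ)⁻¹) • (PowerSeries.exp ℝ - 1) ^ m) :
    (n.factorial : ℝ) * PowerSeries.coeff n
        (((qnum q x) ^ r / (r.factorial : ℝ)) •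
          (PowerSeries.X ^ r *
            psRpow (1 + p • (PowerSeries.exp ℝ - 1)) ((N : ℝ) * (1 - qnum q⁻¹ x)))) =
      (qnum q x) ^ r * (n.choose r : ℝ) *
        ∑ m ∈ Finset.range (n - r + 1),
          p ^ m * fallFact ((N : ℝ) * (1 - qnum q⁻¹ x)) m * S (n - r) m :=
  stmt_14_general N p q x r n hrn S hS
end
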